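/- Given a quantaloid V and a V-category A, the slice construction V(A) — with objects those of A, hom-posets V(A)(a,b) = {f ∈ V(a_+, b_+) : f ≤ A(a,b)} ordered as in V, composition inherited from V, and identity at a the element id_{a_+} viewed below A(a,a) — is itself a quantaloid, and there is an isomorphism of 2-categories V(A)-Cat ≅ V-Cat ↓ A between V(A)-enriched categories and the slice 2-category of V-categories over A. -/

import Mathlib

/-- A quantaloid: a (small) locally ordered bicategory whose hom-posets are
complete lattices and whose composition preserves suprema in each variable. -/
structure Quantaloid where
  Obj : Type
  Hom : Obj → Obj → Type
  [lat : ∀ u v : Obj, CompleteLattice (Hom u v)]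
  comp : ∀ {u v w : Obj}, Hom u v → Hom v w → Hom u w
  id : ∀ u : Obj, Hom u u
  comp_assoc : ∀ {u v w x : Obj} (f : Hom u v) (g : Hom v w) (h : Hom w x),
    comp (comp f g) h = comp f (comp g h)
  id_comp : ∀ {u v : Obj} (f : Hom u v), comp (id u) f = f
  comp_id : ∀ {u v : Obj} (f : Hom u v), comp f (id v) = f
  comp_sSup_left : ∀ {u v w : Obj} (S : Set (Hom u v)) (g : Hom v w),
    comp (sSup S) g = sSup ((fun f => comp f g) '' S)
  comp_sSup_right : ∀ {u v w : Obj} (f : Hom u v) (S : Set (Hom v w)),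
    comp f (sSup S) = sSup ((fun g => comp f g) '' S)

attribute [instance] Quantaloid.lat

/-- Transport of homs along equalities of objects. -/
def Quantaloid.cast (V : Quantaloid) {u u' v v' : V.Obj} (hu : u = u') (hv : v = v')
    (f : V.Hom u v) : V.Hom u' v' := hu ▸ hv ▸ f

/-- A `V`-category. -/
structure VCat (V : Quantaloid) where
  Obj : Type
  pt : Obj → V.Obj
  hom : ∀ a b : Obj, V.Hom (pt a) (pt b)
  id_le : ∀ a, V.id (pt a) ≤ hom a a
  comp_le : ∀ a b c, V.comp (hom a b) (hom b c) ≤ hom a c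

/-- A simulation from `A` to `B`. -/
def IsSimulation (V : Quantaloid) (A B : VCat V) (R : A.Obj → B.Obj → Prop) : Prop :=
  (∀ a b, R a b → A.pt a = B.pt b) ∧
  ∀ (a : A.Obj) (b : B.Obj), R a b → ∀ (a' : A.Obj) (h : A.pt a = B.pt b),
    V.cast h rfl (A.hom a a') ≤
      sSup {x : V.Hom (B.pt b) (A.pt a') |
        ∃ (b' : B.Obj) (h' : A.pt a' = B.pt b'), R a' b' ∧ x = V.cast rfl h'.symm (B.hom b b')}

/-- A bisimulation from `A` to `B`. -/
def IsBisimulation (V : Quantaloid) (A B : VCat V) (R : A.Obj → B.Obj → Prop) : Prop :=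
  IsSimulation V A B R ∧ IsSimulation V B A (fun b a => R a b)

/-- Bisimilarity of `V`-categories. -/
def Bisimilar (V : Quantaloid) (A B : VCat V) : Prop :=
  ∃ R, IsBisimulation V A B R ∧ (∀ a, ∃ b, R a b) ∧ (∀ b, ∃ a, R a b)

/-- A `V`-functor. -/
structure VFunctor (V : Quantaloid) (A B : VCat V) where
  toFun : A.Obj → B.Obj
  pt_eq : ∀ a, B.pt (toFun a) = A.pt a
  map_le : ∀ a a',
    V.cast (pt_eq a).symm (pt_eq a').symm (A.hom a a') ≤ B.hom (toFun a) (toFun a')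

/-- A surjective functional bisimulation (an "open" map). -/
def VFunctor.IsSFB {V : Quantaloid} {A B : VCat V} (f : VFunctor V A B) : Prop :=
  Function.Surjective f.toFun ∧
  ∀ (a : A.Obj) (b : B.Obj),
    B.hom (f.toFun a) b =
      sSup {x : V.Hom (B.pt (f.toFun a)) (B.pt b) |
        ∃ (a' : A.Obj) (h : f.toFun a' = b),
          x = V.cast (f.pt_eq a).symm ((f.pt_eq a').symm.trans (congrArg B.pt h)) (A.hom a a')}

/-! Composition in a quantaloid preserves binary joins, hence is monotone in each variable, so
the down-sets `↓A(a,b)` are closed under composition, contain the identities and inherit all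
suprema from `V`. A `V(A)`-category is then literally a `V`-category `X` with an object map
`p : X → A` such that `X(x,y) ≤ A(px,py)`, i.e. a `V`-functor `X → A`; and a `V(A)`-functor is a
`V`-functor whose object map commutes with these projections. -/

namespace Quantaloid

variable {V : Quantaloid}

theorem comp_sup_left {u v w : V.Obj} (f f' : V.Hom u v) (g : V.Hom v w) :
    V.comp (f ⊔ f') g = V.comp f g ⊔ V.comp f' g := by
  rw [← sSup_pair, V.comp_sSup_left, Set.image_pair, sSup_pair]

theorem comp_sup_right {u v w : V.Obj} (f : V.Hom u v) (g g' : V.Hom v w) :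
    V.comp f (g ⊔ g') = V.comp f g ⊔ V.comp f g' := by
  rw [← sSup_pair, V.comp_sSup_right, Set.image_pair, sSup_pair]

theorem comp_le_comp {u v w : V.Obj} {f f' : V.Hom u v} {g g' : V.Hom v w}
    (hf : f ≤ f') (hg : g ≤ g') : V.comp f g ≤ V.comp f' g' :=
  calc V.comp f g ≤ V.comp f' g := by
        rw [← sup_eq_right.2 hf, comp_sup_left]; exact le_sup_left
    _ ≤ V.comp f' g' := by
        rw [← sup_eq_right.2 hg, comp_sup_right]; exact le_sup_left

theorem cast_id {u u' : V.Obj} (h : u = u') : V.cast h h (V.id u) = V.id u' := by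
  subst h; rfl

theorem cast_comp {u u' v v' w w' : V.Obj} (hu : u = u') (hv : v = v') (hw : w = w')
    (f : V.Hom u v) (g : V.Hom v w) :
    V.cast hu hw (V.comp f g) = V.comp (V.cast hu hv f) (V.cast hv hw g) := by
  subst hu hv hw; rfl

theorem cast_mono {u u' v v' : V.Obj} (hu : u = u') (hv : v = v') :
    Monotone (V.cast hu hv) := by
  subst hu hv; exact monotone_id

noncomputable def slice (V : Quantaloid) (A : VCat V) : Quantaloid where
  Obj := A.Obj
  Hom a b := Set.Iic (A.hom a b)
  comp {a b c} f g := ⟨V.comp f.1 g.1, (comp_le_comp f.2 g.2).trans (A.comp_le a b c)⟩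
  id a := ⟨V.id (A.pt a), A.id_le a⟩
  comp_assoc f g h := Subtype.ext (V.comp_assoc f.1 g.1 h.1)
  id_comp f := Subtype.ext (V.id_comp f.1)
  comp_id f := Subtype.ext (V.comp_id f.1)
  comp_sSup_left S g := Subtype.ext <| by
    simp only [Set.Iic.coe_sSup, V.comp_sSup_left, Set.image_image]
  comp_sSup_right f S := Subtype.ext <| by
    simp only [Set.Iic.coe_sSup, V.comp_sSup_right, Set.image_image]

theorem slice_cast_coe {A : VCat V} {a a' b b' : (V.slice A).Obj} (ha : a = a') (hb : b = b')
    (f : (V.slice A).Hom a b) :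
    ((V.slice A).cast ha hb f).1 = V.cast (congrArg A.pt ha) (congrArg A.pt hb) f.1 := by
  subst ha hb; rfl

end Quantaloid

namespace VCat

variable {V : Quantaloid} {A : VCat V}

def underlying (C : VCat (V.slice A)) : VCat V where
  Obj := C.Obj
  pt x := A.pt (C.pt x)
  hom a b := (C.hom a b).1
  id_le a := C.id_le a
  comp_le a b c := C.comp_le a b c

def projection (C : VCat (V.slice A)) : VFunctor V (underlying C) A where
  toFun := C.pt
  pt_eq _ := rfl
  map_le a a' := (C.hom a a').2

def ofOver {X : VCat V} (F : VFunctor V X A) : VCat (V.slice A) where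
  Obj := X.Obj
  pt := F.toFun
  hom a b := ⟨V.cast (F.pt_eq a).symm (F.pt_eq b).symm (X.hom a b), F.map_le a b⟩
  id_le a := (V.cast_id _).symm.trans_le (V.cast_mono _ _ (X.id_le a))
  comp_le a b c := (V.cast_comp _ _ _ _ _).symm.trans_le (V.cast_mono _ _ (X.comp_le a b c))

variable (A) in
def sliceEquivOver : VCat (V.slice A) ≃ Σ X : VCat V, VFunctor V X A where
  toFun C := ⟨underlying C, projection C⟩
  invFun p := ofOver p.2
  left_inv _ := rfl
  right_inv := by
    rintro ⟨⟨Obj, pt, hom, id_le, comp_le⟩, ⟨F, pt_eq, map_le⟩⟩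
    dsimp only at F pt_eq map_le
    -- once the base points of `X` are those of `A` along `F`, all the casts are trivial
    obtain rfl : pt = A.pt ∘ F := funext fun a => (pt_eq a).symm
    rfl

def sliceFunctorEquiv (C D : VCat (V.slice A)) :
    VFunctor (V.slice A) C D ≃
      {h : VFunctor V (underlying C) (underlying D) // ∀ x, D.pt (h.toFun x) = C.pt x} where
  toFun G := ⟨⟨G.toFun, fun a => congrArg A.pt (G.pt_eq a),
    fun a a' => (V.slice_cast_coe _ _ _).symm.trans_le (G.map_le a a')⟩, G.pt_eq⟩
  invFun h := ⟨h.1.toFun, h.2,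
    fun a a' => (V.slice_cast_coe _ _ _).trans_le (h.1.map_le a a')⟩
  left_inv _ := rfl
  right_inv _ := rfl

end VCat

/-- the slice construction `V(A)` is a quantaloid with objects
those of `A` and hom-posets the down-sets `{f : f ≤ A(a,b)}` of `V(a₊,b₊)`, with
composition and identities inherited from `V`, and there is an isomorphism
between `V(A)`-categories and the slice of `V`-categories over `A`, compatible
with morphisms (`V(A)`-functors correspond to triangles over `A`). -/
theorem slice_quantaloid_and_slice_iso (V : Quantaloid) (A : VCat V) :
    ∃ (VA : Quantaloid) (eObj : VA.Obj ≃ A.Obj)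
      (eHom : ∀ a b : VA.Obj,
        VA.Hom a b ≃o {x : V.Hom (A.pt (eObj a)) (A.pt (eObj b)) // x ≤ A.hom (eObj a) (eObj b)}),
      (∀ (a b c : VA.Obj) (f : VA.Hom a b) (g : VA.Hom b c),
        ((eHom a c) (VA.comp f g)).1 = V.comp ((eHom a b) f).1 ((eHom b c) g).1) ∧
      (∀ a : VA.Obj, ((eHom a a) (VA.id a)).1 = V.id (A.pt (eObj a))) ∧
      ∃ E : VCat VA ≃ (Σ X : VCat V, VFunctor V X A),
        ∀ C D : VCat VA,
          Nonempty (VFunctor VA C D ≃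
            {h : VFunctor V (E C).1 (E D).1 //
              ∀ x, (E D).2.toFun (h.toFun x) = (E C).2.toFun x}) :=
  ⟨V.slice A, Equiv.refl _, fun _ _ => OrderIso.refl _, fun _ _ _ _ _ => rfl, fun _ => rfl,
    VCat.sliceEquivOver A, fun C D => ⟨VCat.sliceFunctorEquiv C D⟩⟩
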